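/- arXiv:2404.04174 — 4 statements merged into one kernel-verified Lean document; each statement's English description precedes it below -/
import Mathlib

section
/- Let $f_1,\ldots,f_m:\mathbb{R}^n\to\mathbb{R}$ be convex differentiable and $g_1,\ldots,g_m:\mathbb{R}^n\to\mathbb{R}\cup\{+\infty\}$ convex, $x\in\mathbb{R}^n$ with all $g_i(x)$ finite, $u\ne 0$, $\varepsilon>0$. If $M:=\max_{i}\{\langle\nabla f_i(x),u\rangle+g_i(x+u)-g_i(x)\}<0$ and $u$ is not an $\varepsilon$-normalized descent direction at $x$ (i.e., $M+\varepsilon\|u\|^2>0$), then for any real $t$ with $0<t\le|M|$, the vector $d=\frac{tu}{\varepsilon\|u\|^2}$ is an $\varepsilon$-normalized descent direction of $\mathcal{V}$ at $x$. -/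
noncomputable section

/-- Convexity for extended-real-valued functions. -/
def ERealConvexOn {n : ℕ} (g : EuclideanSpace ℝ (Fin n) → EReal) : Prop :=
  ∀ a b : EuclideanSpace ℝ (Fin n), ∀ θ : ℝ, 0 ≤ θ → θ ≤ 1 →
    g (θ • a + (1 - θ) • b) ≤ (θ : EReal) * g a + ((1 - θ : ℝ) : EReal) * g b

/-- `ψ(x,y) = max_i { ⟨∇f_i(x), y⟩ + g_i(x+y) - g_i(x) }`. -/
def psi {n m : ℕ} (Gf : Fin m → EuclideanSpace ℝ (Fin n) → EuclideanSpace ℝ (Fin n))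
    (g : Fin m → EuclideanSpace ℝ (Fin n) → EReal)
    (x y : EuclideanSpace ℝ (Fin n)) : EReal :=
  ⨆ i, (((inner ℝ (Gf i x) y : ℝ) : EReal) + g i (x + y) - g i x)

/-! Since every `g i` is convex and finite at `x`, `ψ(x, ·)` is subhomogeneous along the ray
through `u`: `ψ(x, θ u) ≤ θ ψ(x, u)` for `θ ∈ [0, 1]`. Writing `M = ψ(x, u)` and `c = ε ‖u‖²`,
the step `θ = t / c` lies in `(0, 1]` because `t ≤ -M < c`, and then
`ψ(x, θ u) + ε ‖θ u‖² ≤ θ M + θ t ≤ 0`. -/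

open EReal

section

variable {n : ℕ}

theorem ERealConvexOn.sub_le_mul_sub {g : EuclideanSpace ℝ (Fin n) → EReal} (hg : ERealConvexOn g)
    {x : EuclideanSpace ℝ (Fin n)} (hx_bot : g x ≠ ⊥) (hx_top : g x ≠ ⊤)
    (u : EuclideanSpace ℝ (Fin n)) {θ : ℝ} (hθ0 : 0 ≤ θ) (hθ1 : θ ≤ 1) :
    g (x + θ • u) - g x ≤ θ * (g (x + u) - g x) := by
  have h := hg (x + u) x θ hθ0 hθ1
  rw [show θ • (x + u) + (1 - θ) • x = x + θ • u by module] at h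
  lift g x to ℝ using ⟨hx_top, hx_bot⟩ with a
  calc g (x + θ • u) - a ≤ θ * g (x + u) + ((1 - θ : ℝ) : EReal) * a - a := sub_le_sub h le_rfl
    _ = θ * (g (x + u) - a) := by
      rw [mul_sub_of_nonneg_of_ne_top (by exact_mod_cast hθ0) (coe_ne_top θ), ← coe_mul, ← coe_mul,
        add_sub_assoc, ← coe_sub, sub_eq_add_neg _ (_ : EReal), ← coe_neg]
      congr 2
      ring

theorem psi_term_smul_le {g : EuclideanSpace ℝ (Fin n) → EReal} (hg : ERealConvexOn g)
    {x : EuclideanSpace ℝ (Fin n)} (hx_bot : g x ≠ ⊥) (hx_top : g x ≠ ⊤)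
    (v u : EuclideanSpace ℝ (Fin n)) {θ : ℝ} (hθ0 : 0 ≤ θ) (hθ1 : θ ≤ 1) :
    ((inner ℝ v (θ • u) : ℝ) : EReal) + g (x + θ • u) - g x
      ≤ θ * (((inner ℝ v u : ℝ) : EReal) + g (x + u) - g x) := by
  rw [add_sub_assoc, add_sub_assoc, real_inner_smul_right, coe_mul,
    left_distrib_of_nonneg_of_ne_top (by exact_mod_cast hθ0) (coe_ne_top θ)]
  gcongr
  exact hg.sub_le_mul_sub hx_bot hx_top u hθ0 hθ1

theorem psi_smul_le {m : ℕ} {Gf : Fin m → EuclideanSpace ℝ (Fin n) → EuclideanSpace ℝ (Fin n)}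
    {g : Fin m → EuclideanSpace ℝ (Fin n) → EReal} (hg : ∀ i, ERealConvexOn (g i))
    {x : EuclideanSpace ℝ (Fin n)} (hx_bot : ∀ i, g i x ≠ ⊥) (hx_top : ∀ i, g i x ≠ ⊤)
    (u : EuclideanSpace ℝ (Fin n)) {θ : ℝ} (hθ0 : 0 ≤ θ) (hθ1 : θ ≤ 1) :
    psi Gf g x (θ • u) ≤ θ * psi Gf g x u :=
  iSup_le fun i => (psi_term_smul_le (hg i) (hx_bot i) (hx_top i) _ u hθ0 hθ1).trans <|
    mul_le_mul_of_nonneg_left (le_iSup_of_le i le_rfl) (by exact_mod_cast hθ0)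

end

theorem stmt1_general {n m : ℕ}
    (Gf : Fin m → EuclideanSpace ℝ (Fin n) → EuclideanSpace ℝ (Fin n))
    (g : Fin m → EuclideanSpace ℝ (Fin n) → EReal)
    (hgconv : ∀ i, ERealConvexOn (g i))
    (hgbot : ∀ i y, g i y ≠ ⊥)
    (x : EuclideanSpace ℝ (Fin n))
    (hgx : ∀ i, g i x ≠ ⊤)
    (u : EuclideanSpace ℝ (Fin n))
    (ε : ℝ)
    (hM : psi Gf g x u < 0)
    (hnot : psi Gf g x u + ((ε * ‖u‖ ^ 2 : ℝ) : EReal) > 0)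
    (t : ℝ) (ht0 : 0 < t) (ht1 : (t : EReal) ≤ -(psi Gf g x u)) :
    psi Gf g x ((t / (ε * ‖u‖ ^ 2)) • u)
      + ((ε * ‖(t / (ε * ‖u‖ ^ 2)) • u‖ ^ 2 : ℝ) : EReal) ≤ 0 := by
  have hψ_bot : psi Gf g x u ≠ ⊥ := fun h => by simp [h] at hnot
  have hψ_le := fun θ : ℝ => psi_smul_le (Gf := Gf) (θ := θ) hgconv (fun i => hgbot i x) hgx u
  set c := ε * ‖u‖ ^ 2 with hc_def
  lift psi Gf g x u to ℝ using ⟨hM.ne_top, hψ_bot⟩ with M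
  norm_cast at hM hnot ht1
  have hc : 0 < c := by linarith
  have hθ0 : 0 ≤ t / c := by positivity
  have hθ1 : t / c ≤ 1 := (div_le_one hc).2 (by linarith)
  have hnorm : ε * ‖(t / c) • u‖ ^ 2 = t / c * t := by
    rw [norm_smul, Real.norm_of_nonneg hθ0, hc_def]
    field_simp
  calc psi Gf g x ((t / c) • u) + ((ε * ‖(t / c) • u‖ ^ 2 : ℝ) : EReal)
      ≤ ((t / c * M + t / c * t : ℝ) : EReal) := by
        rw [hnorm, coe_add, coe_mul]
        gcongr
        exact hψ_le _ hθ0 hθ1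
    _ ≤ 0 := by
        rw [← mul_add]
        exact_mod_cast mul_nonpos_of_nonneg_of_nonpos hθ0 (by linarith)

theorem stmt1 {n m : ℕ} (hm : 0 < m)
    (f : Fin m → EuclideanSpace ℝ (Fin n) → ℝ)
    (Gf : Fin m → EuclideanSpace ℝ (Fin n) → EuclideanSpace ℝ (Fin n))
    (hfconv : ∀ i, ConvexOn ℝ Set.univ (f i))
    (hfdiff : ∀ i x, HasGradientAt (f i) (Gf i x) x)
    (g : Fin m → EuclideanSpace ℝ (Fin n) → EReal)
    (hgconv : ∀ i, ERealConvexOn (g i))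
    (hgbot : ∀ i y, g i y ≠ ⊥)
    (x : EuclideanSpace ℝ (Fin n))
    (hgx : ∀ i, g i x ≠ ⊤)
    (u : EuclideanSpace ℝ (Fin n)) (hu : u ≠ 0)
    (ε : ℝ) (hε : 0 < ε)
    (hM : psi Gf g x u < 0)
    (hnot : psi Gf g x u + ((ε * ‖u‖ ^ 2 : ℝ) : EReal) > 0)
    (t : ℝ) (ht0 : 0 < t) (ht1 : (t : EReal) ≤ -(psi Gf g x u)) :
    psi Gf g x ((t / (ε * ‖u‖ ^ 2)) • u)
      + ((ε * ‖(t / (ε * ‖u‖ ^ 2)) • u‖ ^ 2 : ℝ) : EReal) ≤ 0 :=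
  stmt1_general Gf g hgconv hgbot x hgx u ε hM hnot t ht0 ht1
end
end

section
/- Let $f_1,\ldots,f_m:\mathbb{R}^n\to\mathbb{R}$ be convex differentiable with $L$-Lipschitz gradients, and $g_1,\ldots,g_m$ convex lower semicontinuous with $g_i(x)$ finite. Let $\varepsilon>0$, $\beta\in(0,1/2)$, and let $d\ne 0$ be an $\varepsilon$-normalized descent direction of $\mathcal{V}$ at $x$. Then for every $\eta$ with $0<\eta\le(1-2\beta)\zeta_\varepsilon$, where $\zeta_\varepsilon=\min\{2\varepsilon/L,1\}$, and every $i=1,\ldots,m$: $$\mathcal{V}_i(x+\eta d)-\mathcal{V}_i(x)\le\eta\beta\big(\langle\nabla f_i(x),d\rangle+g_i(x+d)-g_i(x)-\varepsilon\|d\|^2\big).$$ -/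
/-!
The descent lemma bounds the increase of `f i` along the step by `η ⟪∇f i x, d⟫ + L η² ‖d‖² / 2`,
and convexity of `g i` on the segment from `x` to `x + d` bounds the increase of `g i` by
`η (g i (x + d) - g i x)`. The descent condition gives `⟪∇f i x, d⟫ + g i (x + d) - g i x ≤ -ε ‖d‖²`,
and the step-size restriction `η L ≤ 2 (1 - 2β) ε` is exactly what lets the quadratic term be
absorbed by a `(1 - 2β)` share of this decrease.
-/

noncomputable section

open Set
open scoped RealInnerProductSpace NNReal

section DescentLemma

variable {E : Type*} [NormedAddCommGroup E] [InnerProductSpace ℝ E] [CompleteSpace E]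
  {f : E → ℝ} {f' : E → E}

theorem HasGradientAt.hasDerivAt_comp_add_smul {x v y : E} {t : ℝ}
    (hf : HasGradientAt f y (x + t • v)) :
    HasDerivAt (fun s : ℝ => f (x + s • v)) ⟪y, v⟫ t := by
  have hline : HasDerivAt (fun s : ℝ => x + s • v) v t := by
    simpa using ((hasDerivAt_id t).smul_const v).const_add x
  exact hf.hasFDerivAt.comp_hasDerivAt t hline

theorem le_add_inner_add_mul_sq_of_lipschitzWith_gradient {K : ℝ≥0}
    (hf : ∀ y, HasGradientAt f (f' y) y) (hK : LipschitzWith K f') (x v : E) :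
    f (x + v) ≤ f x + ⟪f' x, v⟫ + K / 2 * ‖v‖ ^ 2 := by
  set φ : ℝ → ℝ := fun t => f (x + t • v) - t * ⟪f' x, v⟫ - K / 2 * t ^ 2 * ‖v‖ ^ 2
  have hφ (t : ℝ) : HasDerivAt φ (⟪f' (x + t • v) - f' x, v⟫ - K * t * ‖v‖ ^ 2) t := by
    have hquad := ((hasDerivAt_pow 2 t).const_mul ((K : ℝ) / 2)).mul_const (‖v‖ ^ 2)
    refine (((hf _).hasDerivAt_comp_add_smul.sub (hasDerivAt_mul_const _)).sub hquad).congr_deriv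
      ?_
    rw [inner_sub_left]
    ring
  have hgrowth (t : ℝ) (ht : 0 ≤ t) : ⟪f' (x + t • v) - f' x, v⟫ ≤ K * t * ‖v‖ ^ 2 :=
    calc ⟪f' (x + t • v) - f' x, v⟫ ≤ ‖f' (x + t • v) - f' x‖ * ‖v‖ := real_inner_le_norm _ _
      _ ≤ K * ‖t • v‖ * ‖v‖ := by
          gcongr
          simpa using hK.norm_sub_le (x + t • v) x
      _ = K * t * ‖v‖ ^ 2 := by
          rw [norm_smul, Real.norm_of_nonneg ht]
          ring
  have hanti : AntitoneOn φ (Icc 0 1) := by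
    refine antitoneOn_of_hasDerivWithinAt_nonpos (convex_Icc 0 1)
      (fun t _ => (hφ t).continuousAt.continuousWithinAt)
      (fun t _ => (hφ t).hasDerivWithinAt) fun t ht => ?_
    rw [interior_Icc] at ht
    linarith [hgrowth t ht.1.le]
  have h01 := hanti (left_mem_Icc.2 zero_le_one) (right_mem_Icc.2 zero_le_one) zero_le_one
  simp only [φ, zero_smul, one_smul, add_zero] at h01
  linarith

end DescentLemma

theorem ERealConvexOn.le_add_smul {n : ℕ} {g : EuclideanSpace ℝ (Fin n) → EReal}
    (hg : ERealConvexOn g) {x d : EuclideanSpace ℝ (Fin n)} {a b η : ℝ}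
    (ha : g x = a) (hb : g (x + d) = b) (hη0 : 0 ≤ η) (hη1 : η ≤ 1) :
    g (x + η • d) ≤ ((a + η * (b - a) : ℝ) : EReal) := by
  have hseg : η • (x + d) + (1 - η) • x = x + η • d := by module
  have h := hg (x + d) x η hη0 hη1
  rw [hseg, ha, hb] at h
  convert h using 1
  norm_cast
  ring_nf

theorem mul_add_mul_sq_le_of_add_le_zero {a s ε β η L : ℝ} (hs : 0 ≤ s) (hη : 0 ≤ η)
    (hβ : β ≤ 1) (hηL : η * L ≤ (1 - 2 * β) * (2 * ε)) (ha : a + ε * s ≤ 0) :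
    η * a + L / 2 * (η ^ 2 * s) ≤ η * β * (a - ε * s) := by
  nlinarith [mul_le_mul_of_nonneg_left ha (mul_nonneg hη (sub_nonneg.2 hβ)),
    mul_le_mul_of_nonneg_right hηL (mul_nonneg hη hs)]

theorem stmt2_general {n m : ℕ}
    (f : Fin m → EuclideanSpace ℝ (Fin n) → ℝ)
    (Gf : Fin m → EuclideanSpace ℝ (Fin n) → EuclideanSpace ℝ (Fin n))
    (hfdiff : ∀ i x, HasGradientAt (f i) (Gf i x) x)
    (L : ℝ) (hL : 0 < L)
    (hlip : ∀ i, LipschitzWith (Real.toNNReal L) (Gf i))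
    (g : Fin m → EuclideanSpace ℝ (Fin n) → EReal)
    (hgconv : ∀ i, ERealConvexOn (g i))
    (hgbot : ∀ i y, g i y ≠ ⊥)
    (x : EuclideanSpace ℝ (Fin n))
    (hgx : ∀ i, g i x ≠ ⊤)
    (ε β : ℝ) (hβ0 : 0 < β) (hβ1 : β < 1 / 2)
    (d : EuclideanSpace ℝ (Fin n))
    (hdesc : psi Gf g x d + ((ε * ‖d‖ ^ 2 : ℝ) : EReal) ≤ 0) :
    ∀ η : ℝ, 0 < η → η ≤ (1 - 2 * β) * min (2 * ε / L) 1 → ∀ i,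
      ((f i (x + η • d) : EReal) + g i (x + η • d)) - ((f i x : EReal) + g i x)
        ≤ ((η * β : ℝ) : EReal) *
            (((inner ℝ (Gf i x) d : ℝ) : EReal) + g i (x + d) - g i x
              - ((ε * ‖d‖ ^ 2 : ℝ) : EReal)) := by
  intro η hη hηle i
  have hη1 : η ≤ 1 := hηle.trans (by nlinarith [min_le_right (2 * ε / L) 1])
  have hηL : η * L ≤ (1 - 2 * β) * (2 * ε) := by
    have := hηle.trans (mul_le_mul_of_nonneg_left (min_le_left _ 1) (by linarith))
    rwa [mul_div_assoc', le_div_iff₀ hL] at this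
  have hdesc_i := (add_le_add_left (le_iSup (fun j =>
    ((⟪Gf j x, d⟫ : ℝ) : EReal) + g j (x + d) - g j x) i) _).trans hdesc
  lift g i x to ℝ using ⟨hgx i, hgbot i x⟩ with a ha
  have htop : g i (x + d) ≠ ⊤ := by
    rintro htop
    rw [htop, EReal.coe_add_top, EReal.top_sub_coe, EReal.top_add_coe] at hdesc_i
    exact (EReal.coe_lt_top 0).not_ge hdesc_i
  lift g i (x + d) to ℝ using ⟨htop, hgbot i _⟩ with b hb
  have hconv := (hgconv i).le_add_smul ha.symm hb.symm hη.le hη1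
  lift g i (x + η • d) to ℝ using ⟨ne_top_of_le_ne_top (EReal.coe_ne_top _) hconv, hgbot i _⟩
    with e he
  have hf := le_add_inner_add_mul_sq_of_lipschitzWith_gradient (hfdiff i) (hlip i) x (η • d)
  rw [Real.coe_toNNReal _ hL.le, inner_smul_right, norm_smul, Real.norm_of_nonneg hη.le,
    mul_pow] at hf
  norm_cast at hdesc_i hconv ⊢
  linarith [mul_add_mul_sq_le_of_add_le_zero (sq_nonneg ‖d‖) hη.le (by linarith) hηL hdesc_i]

theorem stmt2 {n m : ℕ} (hm : 0 < m)
    (f : Fin m → EuclideanSpace ℝ (Fin n) → ℝ)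
    (Gf : Fin m → EuclideanSpace ℝ (Fin n) → EuclideanSpace ℝ (Fin n))
    (hfconv : ∀ i, ConvexOn ℝ Set.univ (f i))
    (hfdiff : ∀ i x, HasGradientAt (f i) (Gf i x) x)
    (L : ℝ) (hL : 0 < L)
    (hlip : ∀ i, LipschitzWith (Real.toNNReal L) (Gf i))
    (g : Fin m → EuclideanSpace ℝ (Fin n) → EReal)
    (hgconv : ∀ i, ERealConvexOn (g i))
    (hglsc : ∀ i, LowerSemicontinuous (g i))
    (hgbot : ∀ i y, g i y ≠ ⊥)
    (x : EuclideanSpace ℝ (Fin n))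
    (hgx : ∀ i, g i x ≠ ⊤)
    (ε β : ℝ) (hε : 0 < ε) (hβ0 : 0 < β) (hβ1 : β < 1 / 2)
    (d : EuclideanSpace ℝ (Fin n)) (hd : d ≠ 0)
    (hdesc : psi Gf g x d + ((ε * ‖d‖ ^ 2 : ℝ) : EReal) ≤ 0) :
    ∀ η : ℝ, 0 < η → η ≤ (1 - 2 * β) * min (2 * ε / L) 1 → ∀ i,
      ((f i (x + η • d) : EReal) + g i (x + η • d)) - ((f i x : EReal) + g i x)
        ≤ ((η * β : ℝ) : EReal) *
            (((inner ℝ (Gf i x) d : ℝ) : EReal) + g i (x + d) - g i x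
              - ((ε * ‖d‖ ^ 2 : ℝ) : EReal)) :=
  stmt2_general f Gf hfdiff L hL hlip g hgconv hgbot x hgx ε β hβ0 hβ1 d hdesc
end
end

section
/- Under the hypotheses of the previous sufficient-decrease lemma (convex $f_i$ with $L$-Lipschitz gradient, convex lsc $g_i$, $\beta\in(0,1/2)$, $d\ne 0$ an $\varepsilon$-normalized descent direction of $\mathcal{V}$ at $x$), for every $\eta$ with $0<\eta\le(1-2\beta)\zeta_\varepsilon$ and every $i$, the strict decrease $\mathcal{V}_i(x+\eta d)<\mathcal{V}_i(x)$ holds; in fact $\mathcal{V}_i(x+\eta d)-\mathcal{V}_i(x)\le-2\eta\beta\varepsilon\|d\|^2<0$. -/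
noncomputable section

/-!
Along the segment `x + t • d`, the `L`-Lipschitz gradient gives the quadratic upper bound
`f (x + η • d) ≤ f x + η ⟪∇f x, d⟫ + L η² ‖d‖² / 2`, and convexity of `g` gives
`g (x + η • d) ≤ g x + η (g (x + d) - g x)`. Adding them, the descent condition bounds the
linear part by `-η ε ‖d‖²`, while the step-size bound `L η / 2 ≤ (1 - 2β) ε` lets the quadratic
part eat at most `η (1 - 2β) ε ‖d‖²`, leaving `-2 η β ε ‖d‖²`.
-/

theorem image_add_smul_le_of_lipschitzWith_gradient {E : Type*} [NormedAddCommGroup E]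
    [InnerProductSpace ℝ E] [CompleteSpace E] {f : E → ℝ} {f' : E → E} {K : NNReal}
    (hf : ∀ x, HasGradientAt f (f' x) x) (hf' : LipschitzWith K f') (x d : E) {t : ℝ}
    (ht : 0 ≤ t) :
    f (x + t • d) ≤ f x + t * inner ℝ (f' x) d + K * t ^ 2 / 2 * ‖d‖ ^ 2 := by
  set φ : ℝ → ℝ := fun s ↦ f (x + s • d) - s * inner ℝ (f' x) d - K / 2 * s ^ 2 * ‖d‖ ^ 2
  have hderiv : ∀ s, HasDerivAt φ
      (inner ℝ (f' (x + s • d)) d - inner ℝ (f' x) d - K * s * ‖d‖ ^ 2) s := by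
    intro s
    have hline : HasDerivAt (fun s : ℝ ↦ x + s • d) d s := by
      simpa using ((hasDerivAt_id s).smul_const d).const_add x
    refine (((hf _).hasFDerivAt.comp_hasDerivAt s hline).sub
      ((hasDerivAt_id' s).mul_const (inner ℝ (f' x) d)) |>.sub
      (((hasDerivAt_pow 2 s).const_mul (K / 2 : ℝ)).mul_const (‖d‖ ^ 2))).congr_deriv ?_
    rw [InnerProductSpace.toDual_apply_apply]
    push_cast
    ring
  have hanti : AntitoneOn φ (Set.Ici 0) := by
    refine antitoneOn_of_hasDerivWithinAt_nonpos (convex_Ici 0)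
      (fun s _ ↦ (hderiv s).continuousAt.continuousWithinAt)
      (fun s _ ↦ (hderiv s).hasDerivWithinAt) fun s hs ↦ ?_
    rw [interior_Ici, Set.mem_Ioi] at hs
    have hlip : ‖f' (x + s • d) - f' x‖ ≤ K * (s * ‖d‖) := by
      simpa [dist_eq_norm, norm_smul, abs_of_pos hs] using hf'.dist_le_mul (x + s • d) x
    have hinner := (real_inner_le_norm (f' (x + s • d) - f' x) d).trans
      (mul_le_mul_of_nonneg_right hlip (norm_nonneg d))
    rw [inner_sub_left] at hinner
    nlinarith
  have hφ : φ t ≤ φ 0 := hanti (Set.mem_Ici.2 le_rfl) ht ht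
  simp only [φ, zero_smul, add_zero, zero_mul, sub_zero, ne_eq, OfNat.ofNat_ne_zero,
    not_false_eq_true, zero_pow, mul_zero] at hφ
  linarith

theorem EReal.exists_coe_of_coe_add_sub_coe_le {y : EReal} {r a s : ℝ} (hy : y ≠ ⊥)
    (h : (r : EReal) + y - a ≤ s) : ∃ b : ℝ, y = b ∧ r + b - a ≤ s := by
  induction y using EReal.rec with
  | bot => exact absurd rfl hy
  | top => simp at h
  | coe b => exact ⟨b, rfl, by exact_mod_cast h⟩

theorem EReal.exists_coe_of_le_coe {y : EReal} {r : ℝ} (hy : y ≠ ⊥) (h : y ≤ r) :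
    ∃ c : ℝ, y = c ∧ c ≤ r := by
  induction y using EReal.rec with
  | bot => exact absurd rfl hy
  | top => simp at h
  | coe c => exact ⟨c, rfl, by exact_mod_cast h⟩

theorem ERealConvexOn.le_coe_of_eq_coe {n : ℕ} {g : EuclideanSpace ℝ (Fin n) → EReal}
    (hg : ERealConvexOn g) {a b : EuclideanSpace ℝ (Fin n)} {u v θ : ℝ} (ha : g a = u)
    (hb : g b = v) (hθ₀ : 0 ≤ θ) (hθ₁ : θ ≤ 1) :
    g (θ • a + (1 - θ) • b) ≤ ((θ * u + (1 - θ) * v : ℝ) : EReal) := by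
  simpa [ha, hb] using hg a b θ hθ₀ hθ₁

theorem inner_add_sub_le_of_psi_add_le {n m : ℕ}
    {Gf : Fin m → EuclideanSpace ℝ (Fin n) → EuclideanSpace ℝ (Fin n)}
    {g : Fin m → EuclideanSpace ℝ (Fin n) → EReal} {x d : EuclideanSpace ℝ (Fin n)} {c : ℝ}
    (h : psi Gf g x d + (c : EReal) ≤ 0) (i : Fin m) :
    ((inner ℝ (Gf i x) d : ℝ) : EReal) + g i (x + d) - g i x ≤ ((-c : ℝ) : EReal) := by
  have hψ : psi Gf g x d ≤ ((-c : ℝ) : EReal) := by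
    rw [EReal.coe_neg, ← zero_sub]
    exact (EReal.le_sub_iff_add_le (.inl (EReal.coe_ne_bot c)) (.inl (EReal.coe_ne_top c))).2 h
  exact (le_iSup _ i).trans hψ

theorem le_one_and_mul_le_of_le_mul_min {L ε β η : ℝ} (hL : 0 < L) (hβ₀ : 0 ≤ β)
    (hβ₁ : β < 1 / 2) (h : η ≤ (1 - 2 * β) * min (2 * ε / L) 1) :
    η ≤ 1 ∧ L * η / 2 ≤ (1 - 2 * β) * ε := by
  have hβ : 0 ≤ 1 - 2 * β := by linarith
  constructor
  · nlinarith [min_le_right (2 * ε / L) 1]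
  · have h' := h.trans (mul_le_mul_of_nonneg_left (min_le_left _ _) hβ)
    rw [mul_div_assoc', le_div_iff₀ hL] at h'
    linarith

theorem stmt3_general {n m : ℕ}
    (f : Fin m → EuclideanSpace ℝ (Fin n) → ℝ)
    (Gf : Fin m → EuclideanSpace ℝ (Fin n) → EuclideanSpace ℝ (Fin n))
    (hfdiff : ∀ i x, HasGradientAt (f i) (Gf i x) x)
    (L : ℝ) (hL : 0 < L)
    (hlip : ∀ i, LipschitzWith (Real.toNNReal L) (Gf i))
    (g : Fin m → EuclideanSpace ℝ (Fin n) → EReal)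
    (hgconv : ∀ i, ERealConvexOn (g i))
    (hgbot : ∀ i y, g i y ≠ ⊥)
    (x : EuclideanSpace ℝ (Fin n))
    (hgx : ∀ i, g i x ≠ ⊤)
    (ε β : ℝ) (hε : 0 < ε) (hβ0 : 0 < β) (hβ1 : β < 1 / 2)
    (d : EuclideanSpace ℝ (Fin n)) (hd : d ≠ 0)
    (hdesc : psi Gf g x d + ((ε * ‖d‖ ^ 2 : ℝ) : EReal) ≤ 0) :
    ∀ η : ℝ, 0 < η → η ≤ (1 - 2 * β) * min (2 * ε / L) 1 → ∀ i,
      ((f i (x + η • d) : EReal) + g i (x + η • d)) - ((f i x : EReal) + g i x)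
          ≤ ((-(2 * η * β * ε * ‖d‖ ^ 2) : ℝ) : EReal)
        ∧ -(2 * η * β * ε * ‖d‖ ^ 2) < (0 : ℝ)
        ∧ (f i (x + η • d) : EReal) + g i (x + η • d) < (f i x : EReal) + g i x := by
  intro η hη hηle i
  obtain ⟨hη₁, hηL⟩ := le_one_and_mul_le_of_le_mul_min hL hβ0.le hβ1 hηle
  obtain ⟨a, ha⟩ : ∃ a : ℝ, g i x = a := ⟨_, (EReal.coe_toReal (hgx i) (hgbot i x)).symm⟩
  obtain ⟨b, hb, hdesc_i⟩ := EReal.exists_coe_of_coe_add_sub_coe_le (hgbot i (x + d))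
    (ha ▸ inner_add_sub_le_of_psi_add_le hdesc i)
  have hseg : η • (x + d) + (1 - η) • x = x + η • d := by module
  obtain ⟨c, hc, hconv⟩ := EReal.exists_coe_of_le_coe (hgbot i (x + η • d))
    (hseg ▸ (hgconv i).le_coe_of_eq_coe hb ha hη.le hη₁)
  have hsmooth := image_add_smul_le_of_lipschitzWith_gradient (hfdiff i) (hlip i) x d hη.le
  rw [Real.coe_toNNReal L hL.le] at hsmooth
  have hdecrease : f i (x + η • d) + c - (f i x + a) ≤ -(2 * η * β * ε * ‖d‖ ^ 2) := by
    nlinarith [mul_le_mul_of_nonneg_left hdesc_i hη.le,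
      mul_le_mul_of_nonneg_right hηL (mul_nonneg hη.le (sq_nonneg ‖d‖))]
  have hneg : -(2 * η * β * ε * ‖d‖ ^ 2) < (0 : ℝ) := by
    have := norm_pos_iff.2 hd
    simp only [neg_lt_zero]
    positivity
  rw [ha, hc]
  exact ⟨by exact_mod_cast hdecrease, hneg,
    by exact_mod_cast sub_neg.1 (hdecrease.trans_lt hneg)⟩

theorem stmt3 {n m : ℕ} (hm : 0 < m)
    (f : Fin m → EuclideanSpace ℝ (Fin n) → ℝ)
    (Gf : Fin m → EuclideanSpace ℝ (Fin n) → EuclideanSpace ℝ (Fin n))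
    (hfconv : ∀ i, ConvexOn ℝ Set.univ (f i))
    (hfdiff : ∀ i x, HasGradientAt (f i) (Gf i x) x)
    (L : ℝ) (hL : 0 < L)
    (hlip : ∀ i, LipschitzWith (Real.toNNReal L) (Gf i))
    (g : Fin m → EuclideanSpace ℝ (Fin n) → EReal)
    (hgconv : ∀ i, ERealConvexOn (g i))
    (hglsc : ∀ i, LowerSemicontinuous (g i))
    (hgbot : ∀ i y, g i y ≠ ⊥)
    (x : EuclideanSpace ℝ (Fin n))
    (hgx : ∀ i, g i x ≠ ⊤)
    (ε β : ℝ) (hε : 0 < ε) (hβ0 : 0 < β) (hβ1 : β < 1 / 2)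
    (d : EuclideanSpace ℝ (Fin n)) (hd : d ≠ 0)
    (hdesc : psi Gf g x d + ((ε * ‖d‖ ^ 2 : ℝ) : EReal) ≤ 0) :
    ∀ η : ℝ, 0 < η → η ≤ (1 - 2 * β) * min (2 * ε / L) 1 → ∀ i,
      ((f i (x + η • d) : EReal) + g i (x + η • d)) - ((f i x : EReal) + g i x)
          ≤ ((-(2 * η * β * ε * ‖d‖ ^ 2) : ℝ) : EReal)
        ∧ -(2 * η * β * ε * ‖d‖ ^ 2) < (0 : ℝ)
        ∧ (f i (x + η • d) : EReal) + g i (x + η • d) < (f i x : EReal) + g i x :=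
  stmt3_general f Gf hfdiff L hL hlip g hgconv hgbot x hgx ε β hε hβ0 hβ1 d hd hdesc
end
end

section
/- Suppose a sequence $(x_k)$ satisfies, for a fixed index $i$ and real constants $C>0$ and lower bound $V_{inf}$: $C\,\theta(x_k)^2\le\mathcal{V}_i(x_k)-\mathcal{V}_i(x_{k+1})$ for all $k$, and $\mathcal{V}_i(x_k)\ge V_{inf}$ for all $k$, with $\theta(x_k)\le 0$. Fix $\mu>0$ and suppose there exists $N_\mu\ge 1$ minimal with $|\theta(x_{N_\mu})|\le\mu$ and $|\theta(x_k)|>\mu$ for all $k<N_\mu$. Then $N_\mu\le\frac{\mathcal{V}_i(x_0)-V_{inf}}{C\mu^2}$, i.e., a $\mu$-approximate Pareto critical point is found within $O(1/\mu^2)$ iterations. -/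
noncomputable section

theorem stmt15 {n : ℕ}
    (V θ : EuclideanSpace ℝ (Fin n) → ℝ)
    (x : ℕ → EuclideanSpace ℝ (Fin n))
    (C Vinf : ℝ) (hC : 0 < C)
    (hdec : ∀ k : ℕ, C * (θ (x k)) ^ 2 ≤ V (x k) - V (x (k + 1)))
    (hbound : ∀ k, Vinf ≤ V (x k))
    (hθ : ∀ k, θ (x k) ≤ 0)
    (μ : ℝ) (hμ : 0 < μ)
    (Nμ : ℕ) (hN1 : 1 ≤ Nμ)
    (happrox : |θ (x Nμ)| ≤ μ)
    (hbefore : ∀ k < Nμ, μ < |θ (x k)|) :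
    (Nμ : ℝ) ≤ (V (x 0) - Vinf) / (C * μ ^ 2) := by
  have hpos : 0 < C * μ ^ 2 := by positivity
  rw [le_div_iff₀ hpos]
  calc (Nμ : ℝ) * (C * μ ^ 2)
      = ∑ _k ∈ Finset.range Nμ, C * μ ^ 2 := by
        simp [Finset.sum_const, mul_comm]
    _ ≤ ∑ k ∈ Finset.range Nμ, C * (θ (x k)) ^ 2 := by
        apply Finset.sum_le_sum
        intro k hk
        have h := hbefore k (Finset.mem_range.mp hk)
        have : μ ^ 2 ≤ (θ (x k)) ^ 2 := by
          have := sq_abs (θ (x k))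
          nlinarith [abs_nonneg (θ (x k))]
        nlinarith
    _ ≤ ∑ k ∈ Finset.range Nμ, (V (x k) - V (x (k + 1))) :=
        Finset.sum_le_sum fun k _ => hdec k
    _ = V (x 0) - V (x Nμ) := by
        rw [Finset.sum_range_sub' (fun k => V (x k))]
    _ ≤ V (x 0) - Vinf := by linarith [hbound Nμ]
end
end
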